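/- Let Stab denote the category whose objects are meet-semilattices with a top element and whose morphisms are stable maps, i.e. functions preserving binary meets (but not necessarily the top). Then the opposite category Stab^op is a restriction category when the restriction of a morphism f : A → B of Stab^op (i.e. a stable map f° : B → A) is defined to be the morphism A → A given by the stable map a ↦ a ∧ f°(⊤); that is, this operation satisfies axioms (R1)–(R4). -/

import Mathlib

open CategoryTheory

universe w

/-- The category `Stab`: objects are meet-semilattices with a top element,
morphisms are stable maps (functions preserving binary meets, but not
necessarily the top). -/
structure StabObj : Type (w + 1) where
  carrier : Type w
  [instInf : SemilatticeInf carrier]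
  [instTop : OrderTop carrier]

attribute [instance] StabObj.instInf StabObj.instTop

instance : CoeSort StabObj (Type w) :=
  ⟨StabObj.carrier⟩

/-- A stable map between meet-semilattices with top: preserves binary meets. -/
@[ext]
structure StabHom (A B : StabObj) where
  toFun : A → B
  map_inf : ∀ x y : A, toFun (x ⊓ y) = toFun x ⊓ toFun y

instance : Category StabObj where
  Hom := StabHom
  id A := ⟨fun a => a, fun _ _ => rfl⟩
  comp f g := ⟨fun a => g.toFun (f.toFun a), fun x y => by
    (try dsimp); rw [f.map_inf, g.map_inf]⟩

/-- The restriction operator on `Stabᵒᵖ`: the restriction of `f : A ⟶ B`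
(i.e. of a stable map `f° : B → A`) is given by `a ↦ a ⊓ f°(⊤)`. -/
def stabRest {A B : StabObjᵒᵖ} (f : A ⟶ B) : A ⟶ A :=
  Quiver.Hom.op
    { toFun := fun a => a ⊓ f.unop.toFun ⊤
      map_inf := fun x y => inf_inf_distrib_right x y (f.unop.toFun ⊤) }

/-! Restriction in `Stabᵒᵖ` is meeting with `f°(⊤)`. Hence (R2) and (R3) are commutativity
and associativity of `⊓`, and (R1) and (R4) hold because `f°` preserves meets, using
`f°(b) = f°(b ⊓ ⊤)` for (R1). -/

lemma StabHom.inf_map_top {A B : StabObj} (h : StabHom A B) (a : A) :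
    h.toFun a ⊓ h.toFun ⊤ = h.toFun a := by
  rw [← h.map_inf, inf_top_eq]

namespace StabObj

@[ext]
lemma op_hom_ext {A B : StabObjᵒᵖ} {f g : A ⟶ B}
    (h : ∀ b, f.unop.toFun b = g.unop.toFun b) : f = g :=
  Quiver.Hom.unop_inj (StabHom.ext (funext h))

@[simp]
lemma comp_toFun {A B C : StabObj} (f : A ⟶ B) (g : B ⟶ C) (a : A) :
    (f ≫ g).toFun a = g.toFun (f.toFun a) :=
  rfl

end StabObj

@[simp]
lemma stabRest_unop_toFun {A B : StabObjᵒᵖ} (f : A ⟶ B) (a : A.unop) :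
    (stabRest f).unop.toFun a = a ⊓ f.unop.toFun ⊤ :=
  rfl

/-- `Stabᵒᵖ` is a restriction category with the restriction operator `stabRest`:
the four axioms (R1)–(R4) hold.  (Recall `f ≫ g` denotes `g ∘ f`.) -/
theorem stabOp_isRestrictionCategory :
    -- (R1): `f ∘ f̄ = f`
    (∀ (A B : StabObjᵒᵖ) (f : A ⟶ B), stabRest f ≫ f = f) ∧
    -- (R2): `f̄ ∘ ḡ = ḡ ∘ f̄`
    (∀ (A B X : StabObjᵒᵖ) (f : A ⟶ B) (g : A ⟶ X),
      stabRest g ≫ stabRest f = stabRest f ≫ stabRest g) ∧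
    -- (R3): `(g ∘ f̄)‾ = ḡ ∘ f̄`
    (∀ (A B X : StabObjᵒᵖ) (f : A ⟶ B) (g : A ⟶ X),
      stabRest (stabRest f ≫ g) = stabRest f ≫ stabRest g) ∧
    -- (R4): `ḡ ∘ f = f ∘ (g ∘ f)‾`
    (∀ (A B X : StabObjᵒᵖ) (f : A ⟶ B) (g : B ⟶ X),
      f ≫ stabRest g = stabRest (f ≫ g) ≫ f) := by
  refine ⟨fun A B f => ?r1, fun A B X f g => ?r2, fun A B X f g => ?r3, fun A B X f g => ?r4⟩
  case r1 => ext b; simp [StabHom.inf_map_top]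
  case r2 => ext a; simp [inf_right_comm]
  case r3 => ext a; simp [inf_assoc]
  case r4 => ext b; simp [StabHom.map_inf]
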